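/- arXiv:2605.20107 — 6 statements merged into one kernel-verified Lean document; each statement's English description precedes it below -/
import Mathlib

section
/- Let d ≥ 1, let H be a d×d real symmetric positive definite matrix and c > 0. Then: (i) the matrix Σ* := (c/d)·H⁻¹ is positive semidefinite and satisfies tr(HΣ*) = c and V_H(Σ*) = c/d; (ii) every d×d real symmetric positive semidefinite matrix Σ with tr(HΣ) = c satisfies V_H(Σ) ≥ c/d; and (iii) if such a Σ satisfies V_H(Σ) = c/d then Σ = (c/d)·H⁻¹. -/
/-!
Factor `H = Aᵀ A`. The substitution `w = Aᵀ v` turns `V_H(Σ)` into the supremum of the quadratic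
form of `M = A Σ Aᵀ` over the Euclidean unit ball, i.e. `λ_max(M)`, while `tr(HΣ) = tr M`.
Testing `M` on the standard basis vectors gives `tr M ≤ d · λ_max(M)`, which is (ii). In the case
of equality `λ_max(M) · 1 - M` is positive semidefinite with trace zero, so `M = λ_max(M) · 1`,
which is (iii).
-/

open Matrix

/-- `V_H(Σ) = sup { wᵀΣw : wᵀH⁻¹w ≤ 1 }`. -/
noncomputable def VH {d : ℕ} (H S : Matrix (Fin d) (Fin d) ℝ) : ℝ :=
  sSup {r : ℝ | ∃ w : Fin d → ℝ, w ⬝ᵥ (H⁻¹ *ᵥ w) ≤ 1 ∧ r = w ⬝ᵥ (S *ᵥ w)}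

namespace Matrix

variable {n : Type*} [Fintype n]

lemma transpose_mulVec_dotProduct_mulVec (A X : Matrix n n ℝ) (v : n → ℝ) :
    (Aᵀ *ᵥ v) ⬝ᵥ (X *ᵥ (Aᵀ *ᵥ v)) = v ⬝ᵥ ((A * X * Aᵀ) *ᵥ v) := by
  rw [mulVec_mulVec, dotProduct_mulVec, dotProduct_mulVec, ← vecMul_transpose,
    transpose_transpose, vecMul_vecMul, Matrix.mul_assoc]

lemma bddAbove_dotProduct_mulVec_unitBall (M : Matrix n n ℝ) :
    BddAbove {r : ℝ | ∃ v : n → ℝ, v ⬝ᵥ v ≤ 1 ∧ r = v ⬝ᵥ (M *ᵥ v)} := by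
  have hball : ∀ v : n → ℝ, v ⬝ᵥ v ≤ 1 → v ∈ Metric.closedBall 0 1 := by
    intro v hv
    rw [mem_closedBall_zero_iff, pi_norm_le_iff_of_nonneg zero_le_one]
    intro i
    rw [Real.norm_eq_abs, ← sq_le_one_iff_abs_le_one, sq]
    exact (Finset.single_le_sum (f := fun j => v j * v j) (fun j _ => mul_self_nonneg (v j))
      (Finset.mem_univ i)).trans hv
  refine ((isCompact_closedBall (0 : n → ℝ) 1).bddAbove_image
    (f := fun v => v ⬝ᵥ (M *ᵥ v)) (by fun_prop)).mono ?_
  rintro r ⟨v, hv, rfl⟩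
  exact ⟨v, hball v hv, rfl⟩

open scoped MatrixOrder in
lemma PosDef.exists_isUnit_det_eq_transpose_mul [DecidableEq n] {H : Matrix n n ℝ}
    (hH : H.PosDef) : ∃ A : Matrix n n ℝ, IsUnit A.det ∧ H = Aᵀ * A := by
  obtain ⟨A, hA⟩ := CStarAlgebra.nonneg_iff_eq_star_mul_self.mp hH.posSemidef.nonneg
  rw [star_eq_conjTranspose, conjTranspose_eq_transpose_of_trivial] at hA
  refine ⟨A, isUnit_iff_ne_zero.mpr fun h0 => hH.det_pos.ne' ?_, hA⟩
  rw [hA, det_mul, det_transpose, h0, mul_zero]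

end Matrix

section VH

variable {d : ℕ}

lemma VH_eq_VH_one_mul_mul_transpose {H A : Matrix (Fin d) (Fin d) ℝ} (hA : IsUnit A.det)
    (hH : H = Aᵀ * A) (S : Matrix (Fin d) (Fin d) ℝ) : VH H S = VH 1 (A * S * Aᵀ) := by
  have hAt : IsUnit Aᵀ.det := by rwa [det_transpose]
  have hHinv : A * H⁻¹ * Aᵀ = 1 := by
    rw [hH, Matrix.mul_inv_rev, ← Matrix.mul_assoc, mul_nonsing_inv A hA, Matrix.one_mul,
      nonsing_inv_mul Aᵀ hAt]
  unfold VH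
  congr 1
  ext r
  rw [Set.mem_ofPred_eq, Set.mem_ofPred_eq,
    (mulVec_surjective_iff_isUnit.mpr ((isUnit_iff_isUnit_det _).mpr hAt)).exists]
  simp only [transpose_mulVec_dotProduct_mulVec, hHinv, inv_one, one_mulVec]

lemma dotProduct_mulVec_le_VH_one (M : Matrix (Fin d) (Fin d) ℝ) {v : Fin d → ℝ}
    (hv : v ⬝ᵥ v ≤ 1) : v ⬝ᵥ (M *ᵥ v) ≤ VH 1 M :=
  le_csSup (by simpa only [inv_one, one_mulVec] using bddAbove_dotProduct_mulVec_unitBall M)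
    ⟨v, by rwa [inv_one, one_mulVec], rfl⟩

lemma dotProduct_mulVec_le_VH_one_mul (M : Matrix (Fin d) (Fin d) ℝ) (v : Fin d → ℝ) :
    v ⬝ᵥ (M *ᵥ v) ≤ VH 1 M * (v ⬝ᵥ v) := by
  rcases eq_or_ne v 0 with rfl | hv
  · simp
  have hpos : 0 < v ⬝ᵥ v := by simpa using dotProduct_self_star_pos_iff.mpr hv
  set s := √(v ⬝ᵥ v)
  have hs : s ^ 2 = v ⬝ᵥ v := Real.sq_sqrt hpos.le
  have hs0 : s ≠ 0 := (Real.sqrt_pos.mpr hpos).ne'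
  have hunit := dotProduct_mulVec_le_VH_one M (v := s⁻¹ • v) (by
    refine le_of_eq ?_
    rw [smul_dotProduct, dotProduct_smul, smul_eq_mul, smul_eq_mul, ← hs]
    field_simp)
  rw [mulVec_smul, smul_dotProduct, dotProduct_smul, smul_smul, smul_eq_mul, ← mul_inv] at hunit
  rw [← hs, ← div_le_iff₀ (by positivity), div_eq_inv_mul, sq]
  exact hunit

lemma trace_le_mul_VH_one (M : Matrix (Fin d) (Fin d) ℝ) : M.trace ≤ d * VH 1 M :=
  calc M.trace = ∑ i, Pi.single i 1 ⬝ᵥ (M *ᵥ Pi.single i 1) := by simp [trace]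
    _ ≤ ∑ _i : Fin d, VH 1 M :=
        Finset.sum_le_sum fun i _ => dotProduct_mulVec_le_VH_one M (by simp)
    _ = d * VH 1 M := by simp

lemma eq_VH_one_smul_one_of_trace_eq {M : Matrix (Fin d) (Fin d) ℝ} (hM : M.IsHermitian)
    (htr : M.trace = d * VH 1 M) : M = VH 1 M • 1 := by
  have hpsd : (VH 1 M • 1 - M).PosSemidef := by
    refine .of_dotProduct_mulVec_nonneg
      ((isHermitian_one.smul (IsSelfAdjoint.all _)).sub hM) fun v => ?_
    simpa [sub_mulVec, smul_mulVec, dotProduct_smul] using dotProduct_mulVec_le_VH_one_mul M v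
  have htr0 : (VH 1 M • 1 - M).trace = 0 := by simp [trace_sub, htr, mul_comm]
  exact (sub_eq_zero.mp (hpsd.trace_eq_zero_iff.mp htr0)).symm

variable {H : Matrix (Fin d) (Fin d) ℝ}

lemma trace_mul_le_mul_VH (hH : H.PosDef) (S : Matrix (Fin d) (Fin d) ℝ) :
    (H * S).trace ≤ d * VH H S := by
  obtain ⟨A, hA, rfl⟩ := hH.exists_isUnit_det_eq_transpose_mul
  rw [VH_eq_VH_one_mul_mul_transpose hA rfl, ← trace_mul_cycle A S Aᵀ]
  exact trace_le_mul_VH_one _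

lemma eq_VH_smul_inv_of_trace_mul_eq (hH : H.PosDef) {S : Matrix (Fin d) (Fin d) ℝ}
    (hS : S.IsHermitian) (htr : (H * S).trace = d * VH H S) : S = VH H S • H⁻¹ := by
  obtain ⟨A, hA, rfl⟩ := hH.exists_isUnit_det_eq_transpose_mul
  rw [VH_eq_VH_one_mul_mul_transpose hA rfl, ← trace_mul_cycle A S Aᵀ] at *
  have hM : (A * S * Aᵀ).IsHermitian := by
    simpa [conjTranspose_eq_transpose_of_trivial] using isHermitian_mul_mul_conjTranspose A hS
  have hAt : IsUnit Aᵀ.det := by rwa [det_transpose]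
  calc S = A⁻¹ * (A * S * Aᵀ) * Aᵀ⁻¹ := by
        rw [Matrix.mul_assoc A, nonsing_inv_mul_cancel_left A _ hA,
          mul_nonsing_inv_cancel_right _ _ hAt]
    _ = VH 1 (A * S * Aᵀ) • (Aᵀ * A)⁻¹ := by
        conv_lhs => rw [eq_VH_one_smul_one_of_trace_eq hM htr]
        rw [Matrix.mul_smul, Matrix.smul_mul, Matrix.mul_one, Matrix.mul_inv_rev]

lemma VH_smul_inv_le {k : ℝ} (hk : 0 ≤ k) : VH H (k • H⁻¹) ≤ k := by
  refine csSup_le ⟨0, 0, by simp, by simp⟩ ?_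
  rintro r ⟨w, hw, rfl⟩
  rw [smul_mulVec, dotProduct_smul, smul_eq_mul]
  exact mul_le_of_le_one_right hk hw

end VH

theorem stmt1 {d : ℕ} (hd : 1 ≤ d) (H : Matrix (Fin d) (Fin d) ℝ)
    (hH : H.PosDef) (c : ℝ) (hc : 0 < c) :
    (((c / (d : ℝ)) • H⁻¹).PosSemidef ∧
      (H * ((c / (d : ℝ)) • H⁻¹)).trace = c ∧
      VH H ((c / (d : ℝ)) • H⁻¹) = c / (d : ℝ)) ∧
    (∀ S : Matrix (Fin d) (Fin d) ℝ, S.PosSemidef → (H * S).trace = c →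
      c / (d : ℝ) ≤ VH H S) ∧
    (∀ S : Matrix (Fin d) (Fin d) ℝ, S.PosSemidef → (H * S).trace = c →
      VH H S = c / (d : ℝ) → S = (c / (d : ℝ)) • H⁻¹) := by
  have hd0 : (0 : ℝ) < d := by exact_mod_cast hd
  have hcd : 0 ≤ c / d := by positivity
  have lower : ∀ S, (H * S).trace = c → c / d ≤ VH H S := fun S hSc =>
    (div_le_iff₀' hd0).mpr (hSc ▸ trace_mul_le_mul_VH hH S)
  have htr : (H * ((c / d) • H⁻¹)).trace = c := by
    rw [Matrix.mul_smul, mul_nonsing_inv H (H.isUnit_iff_isUnit_det.mp hH.isUnit), trace_smul,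
      trace_one, Fintype.card_fin, smul_eq_mul]
    field_simp
  refine ⟨⟨hH.inv.posSemidef.smul hcd, htr, le_antisymm (VH_smul_inv_le hcd) (lower _ htr)⟩,
    fun S _ hSc => lower S hSc, fun S hS hSc hV => ?_⟩
  rw [← hV]
  exact eq_VH_smul_inv_of_trace_mul_eq hH hS.isHermitian (by rw [hSc, hV]; field_simp)
end

section
/- Let d ≥ 1, c > 0, and let M and H be d×d real symmetric positive definite matrices. Define Σ_M(H) := (c / tr(HM))·M. Then tr(H·Σ_M(H)) = c, and the regret ratio satisfies V_H(Σ_M(H)) / V_H((c/d)·H⁻¹) = d·λ_max(H^{1/2} M H^{1/2}) / tr(HM). This ratio always lies in [1, d], and it equals 1 if and only if M = α·H⁻¹ for some α > 0. -/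
open Matrix
open scoped MatrixOrder

/-- Largest eigenvalue of a real symmetric (Hermitian) matrix; junk value `0` otherwise. -/
noncomputable def lamMax {d : ℕ} (M : Matrix (Fin d) (Fin d) ℝ) : ℝ :=
  if h : M.IsHermitian then ⨆ i, h.eigenvalues i else 0

/-!
Conjugating by `H^{1/2}` maps the ellipsoid `wᵀH⁻¹w ≤ 1` onto the unit ball, so
`V_H(Σ) = λ_max(H^{1/2} Σ H^{1/2})`; in particular `V_H((c/d)·H⁻¹) = c/d`. For
`A = H^{1/2} M H^{1/2}` one has `tr A = tr(HM)`, and `λ_max(A) ≤ tr A ≤ d·λ_max(A)` gives the range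
`[1, d]`. If `tr A = d·λ_max(A)`, then `λ_max(A)·1 - A` is positive semidefinite of trace zero,
hence `A` is scalar, i.e. `M` is a multiple of `H⁻¹`.
-/

namespace Matrix
variable {d : ℕ} {A : Matrix (Fin d) (Fin d) ℝ}

lemma IsHermitian.lamMax_eq (hA : A.IsHermitian) : lamMax A = ⨆ i, hA.eigenvalues i := by
  rw [lamMax, dif_pos hA]

lemma IsHermitian.eigenvalues_le_lamMax (hA : A.IsHermitian) (i : Fin d) :
    hA.eigenvalues i ≤ lamMax A :=
  hA.lamMax_eq ▸ le_ciSup (Finite.bddAbove_range _) i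

lemma IsHermitian.exists_eigenvalues_eq_lamMax [NeZero d] (hA : A.IsHermitian) :
    ∃ i, hA.eigenvalues i = lamMax A :=
  hA.lamMax_eq ▸ exists_eq_ciSup_of_finite

lemma IsHermitian.le_lamMax_smul_one (hA : A.IsHermitian) : A ≤ lamMax A • 1 := by
  rw [← Algebra.algebraMap_eq_smul_one]
  refine le_algebraMap_of_spectrum_le (fun x hx => ?_) hA.isSelfAdjoint
  rw [hA.spectrum_real_eq_range_eigenvalues] at hx
  obtain ⟨i, rfl⟩ := hx
  exact hA.eigenvalues_le_lamMax i

lemma IsHermitian.dotProduct_mulVec_le_lamMax_mul (hA : A.IsHermitian) (x : Fin d → ℝ) :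
    x ⬝ᵥ A *ᵥ x ≤ lamMax A * (x ⬝ᵥ x) := by
  have := (le_iff.mp hA.le_lamMax_smul_one).dotProduct_mulVec_nonneg x
  simpa [sub_mulVec, smul_mulVec, dotProduct_sub] using this

lemma IsHermitian.exists_dotProduct_mulVec_eq_lamMax [NeZero d] (hA : A.IsHermitian) :
    ∃ x : Fin d → ℝ, x ⬝ᵥ x = 1 ∧ x ⬝ᵥ A *ᵥ x = lamMax A := by
  obtain ⟨i, hi⟩ := hA.exists_eigenvalues_eq_lamMax
  have hunit : ⇑(hA.eigenvectorBasis i) ⬝ᵥ ⇑(hA.eigenvectorBasis i) = 1 := by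
    have := hA.eigenvectorBasis.inner_eq_one i
    rw [EuclideanSpace.inner_eq_star_dotProduct] at this
    simpa using this
  refine ⟨_, hunit, ?_⟩
  rw [hA.mulVec_eigenvectorBasis, dotProduct_smul, hunit, hi, smul_eq_mul, mul_one]

lemma IsHermitian.lamMax_eq_of_le_of_eq [NeZero d] (hA : A.IsHermitian) {l : ℝ}
    (hle : ∀ x, x ⬝ᵥ A *ᵥ x ≤ l * (x ⬝ᵥ x)) {x : Fin d → ℝ} (hx : x ⬝ᵥ x = 1)
    (hl : x ⬝ᵥ A *ᵥ x = l) : lamMax A = l := by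
  obtain ⟨y, hy, hyA⟩ := hA.exists_dotProduct_mulVec_eq_lamMax
  refine le_antisymm ?_ ?_
  · simpa [hy, hyA] using hle y
  · simpa [hx, hl] using hA.dotProduct_mulVec_le_lamMax_mul x

lemma IsHermitian.lamMax_smul [NeZero d] (hA : A.IsHermitian) {s : ℝ} (hs : 0 ≤ s) :
    lamMax (s • A) = s * lamMax A := by
  obtain ⟨x, hx, hxA⟩ := hA.exists_dotProduct_mulVec_eq_lamMax
  refine (hA.smul (IsSelfAdjoint.all s)).lamMax_eq_of_le_of_eq (fun y => ?_) hx
    (by simp [smul_mulVec, hxA])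
  simpa [smul_mulVec, mul_assoc] using
    mul_le_mul_of_nonneg_left (hA.dotProduct_mulVec_le_lamMax_mul y) hs

lemma lamMax_smul_one [NeZero d] (s : ℝ) : lamMax (s • 1 : Matrix (Fin d) (Fin d) ℝ) = s :=
  (isHermitian_one.smul (IsSelfAdjoint.all s)).lamMax_eq_of_le_of_eq
    (fun y => by simp [smul_mulVec]) (x := Pi.single 0 1) (by simp) (by simp)

lemma PosDef.lamMax_pos [NeZero d] (hA : A.PosDef) : 0 < lamMax A := by
  obtain ⟨i, hi⟩ := hA.1.exists_eigenvalues_eq_lamMax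
  exact hi ▸ hA.eigenvalues_pos i

lemma PosSemidef.lamMax_le_trace (hA : A.PosSemidef) : lamMax A ≤ A.trace := by
  rw [hA.1.lamMax_eq, hA.1.trace_eq_sum_eigenvalues]
  exact Real.iSup_le
    (fun i => Finset.single_le_sum (fun j _ => hA.eigenvalues_nonneg j) (Finset.mem_univ i))
    (Finset.sum_nonneg fun j _ => hA.eigenvalues_nonneg j)

lemma IsHermitian.trace_le_card_mul_lamMax (hA : A.IsHermitian) : A.trace ≤ d * lamMax A := by
  have := (le_iff.mp hA.le_lamMax_smul_one).trace_nonneg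
  simp only [trace_sub, trace_smul, trace_one, Fintype.card_fin, smul_eq_mul, sub_nonneg] at this
  linarith

lemma IsHermitian.trace_eq_card_mul_lamMax_iff (hA : A.IsHermitian) :
    A.trace = d * lamMax A ↔ A = lamMax A • 1 := by
  have h := (le_iff.mp hA.le_lamMax_smul_one).trace_eq_zero_iff
  rw [sub_eq_zero, eq_comm (b := A)] at h
  rw [← h]
  simp only [trace_sub, trace_smul, trace_one, Fintype.card_fin, smul_eq_mul]
  constructor <;> intro <;> linarith

lemma mulVec_dotProduct_mulVec_mulVec (B S : Matrix (Fin d) (Fin d) ℝ) (x : Fin d → ℝ) :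
    (B *ᵥ x) ⬝ᵥ S *ᵥ (B *ᵥ x) = x ⬝ᵥ (Bᵀ * S * B) *ᵥ x := by
  simp [dotProduct_mulVec, vecMul_vecMul, ← mulVec_mulVec, vecMul_transpose]

lemma transpose_sqrt (H : Matrix (Fin d) (Fin d) ℝ) : (CFC.sqrt H)ᵀ = CFC.sqrt H := by
  rw [← conjTranspose_eq_transpose_of_trivial]
  exact (CFC.sqrt_nonneg H).posSemidef.1.eq

lemma PosDef.isUnit_sqrt {H : Matrix (Fin d) (Fin d) ℝ} (hH : H.PosDef) : IsUnit (CFC.sqrt H) :=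
  (CFC.isUnit_sqrt_iff H hH.posSemidef.nonneg).mpr hH.isUnit

lemma PosDef.sqrt_mul_inv_mul_sqrt {H : Matrix (Fin d) (Fin d) ℝ} (hH : H.PosDef) :
    CFC.sqrt H * H⁻¹ * CFC.sqrt H = 1 := by
  have hB := (isUnit_iff_isUnit_det _).mp hH.isUnit_sqrt
  set B := CFC.sqrt H
  rw [← CFC.sqrt_mul_sqrt_self H hH.posSemidef.nonneg, mul_inv_rev, ← Matrix.mul_assoc,
    mul_nonsing_inv _ hB, Matrix.one_mul, nonsing_inv_mul _ hB]

lemma PosDef.sqrt_mul_mul_sqrt {H M : Matrix (Fin d) (Fin d) ℝ} (hM : M.PosDef) (hH : H.PosDef) :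
    (CFC.sqrt H * M * CFC.sqrt H).PosDef := by
  simpa [conjTranspose_eq_transpose_of_trivial, transpose_sqrt] using
    hM.conjTranspose_mul_mul_same (mulVec_injective_iff_isUnit.mpr hH.isUnit_sqrt)

lemma PosDef.sqrt_mul_mul_sqrt_eq_smul_one_iff {H M : Matrix (Fin d) (Fin d) ℝ}
    (hH : H.PosDef) (α : ℝ) : CFC.sqrt H * M * CFC.sqrt H = α • 1 ↔ M = α • H⁻¹ := by
  have hB := (isUnit_iff_isUnit_det _).mp hH.isUnit_sqrt
  constructor
  · intro h
    calc M = (CFC.sqrt H)⁻¹ * (CFC.sqrt H * M * CFC.sqrt H) * (CFC.sqrt H)⁻¹ := by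
          simp only [Matrix.mul_assoc, mul_nonsing_inv _ hB, Matrix.mul_one,
            nonsing_inv_mul_cancel_left _ _ hB]
      _ = α • (CFC.sqrt H * CFC.sqrt H)⁻¹ := by rw [h, mul_inv_rev]; simp
      _ = α • H⁻¹ := by rw [CFC.sqrt_mul_sqrt_self H hH.posSemidef.nonneg]
  · rintro rfl
    rw [Matrix.mul_smul, Matrix.smul_mul, hH.sqrt_mul_inv_mul_sqrt]

lemma trace_sqrt_mul_mul_sqrt {H : Matrix (Fin d) (Fin d) ℝ} (hH : H.PosSemidef)
    (M : Matrix (Fin d) (Fin d) ℝ) : (CFC.sqrt H * M * CFC.sqrt H).trace = (H * M).trace := by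
  rw [trace_mul_cycle, CFC.sqrt_mul_sqrt_self H hH.nonneg]

end Matrix

section VH

variable {d : ℕ}

lemma VH_one_eq_lamMax [NeZero d] {A : Matrix (Fin d) (Fin d) ℝ} (hA : A.PosSemidef) :
    VH 1 A = lamMax A := by
  refine IsGreatest.csSup_eq ⟨?_, ?_⟩
  · obtain ⟨x, hx, hxA⟩ := hA.1.exists_dotProduct_mulVec_eq_lamMax
    exact ⟨x, by simp [hx], hxA.symm⟩
  · rintro r ⟨w, hw, rfl⟩
    have hL : 0 ≤ lamMax A := by
      obtain ⟨i, hi⟩ := hA.1.exists_eigenvalues_eq_lamMax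
      exact hi ▸ hA.eigenvalues_nonneg i
    rw [inv_one, one_mulVec] at hw
    calc w ⬝ᵥ A *ᵥ w ≤ lamMax A * (w ⬝ᵥ w) := hA.1.dotProduct_mulVec_le_lamMax_mul w
      _ ≤ lamMax A := mul_le_of_le_one_right hL hw

lemma VH_eq_VH_one_sqrt_mul_mul_sqrt {H : Matrix (Fin d) (Fin d) ℝ} (hH : H.PosDef)
    (S : Matrix (Fin d) (Fin d) ℝ) : VH H S = VH 1 (CFC.sqrt H * S * CFC.sqrt H) := by
  have hB : Function.Surjective (CFC.sqrt H).mulVec :=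
    mulVec_surjective_iff_isUnit.mpr hH.isUnit_sqrt
  unfold VH
  congr 1
  ext r
  rw [Set.mem_ofPred_eq, Set.mem_ofPred_eq, hB.exists]
  simp only [mulVec_dotProduct_mulVec_mulVec, transpose_sqrt, hH.sqrt_mul_inv_mul_sqrt, inv_one]

lemma VH_eq_lamMax [NeZero d] {H S : Matrix (Fin d) (Fin d) ℝ} (hH : H.PosDef)
    (hS : S.PosSemidef) : VH H S = lamMax (CFC.sqrt H * S * CFC.sqrt H) := by
  rw [VH_eq_VH_one_sqrt_mul_mul_sqrt hH, VH_one_eq_lamMax]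
  simpa [conjTranspose_eq_transpose_of_trivial, transpose_sqrt] using
    hS.conjTranspose_mul_mul_same (CFC.sqrt H)

end VH

theorem stmt6 {d : ℕ} (hd : 1 ≤ d) (c : ℝ) (hc : 0 < c)
    (M H : Matrix (Fin d) (Fin d) ℝ) (hM : M.PosDef) (hH : H.PosDef) :
    (H * ((c / (H * M).trace) • M)).trace = c ∧
    VH H ((c / (H * M).trace) • M) / VH H ((c / (d : ℝ)) • H⁻¹)
      = (d : ℝ) * lamMax (CFC.sqrt H * M * CFC.sqrt H) / (H * M).trace ∧
    1 ≤ VH H ((c / (H * M).trace) • M) / VH H ((c / (d : ℝ)) • H⁻¹) ∧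
    VH H ((c / (H * M).trace) • M) / VH H ((c / (d : ℝ)) • H⁻¹) ≤ (d : ℝ) ∧
    (VH H ((c / (H * M).trace) • M) / VH H ((c / (d : ℝ)) • H⁻¹) = 1 ↔
      ∃ α : ℝ, 0 < α ∧ M = α • H⁻¹) := by
  have : NeZero d := ⟨by omega⟩
  set A := CFC.sqrt H * M * CFC.sqrt H
  have hA : A.PosDef := hM.sqrt_mul_mul_sqrt hH
  have htrace : (H * M).trace = A.trace := (trace_sqrt_mul_mul_sqrt hH.posSemidef M).symm
  have ht : 0 < A.trace := hA.trace_pos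
  have hcd : 0 < c / d := div_pos hc (by positivity)
  have hct : 0 < c / A.trace := div_pos hc ht
  have hV_M : VH H ((c / A.trace) • M) = c / A.trace * lamMax A := by
    rw [VH_eq_lamMax hH (hM.posSemidef.smul hct.le), Matrix.mul_smul, Matrix.smul_mul,
      hA.1.lamMax_smul hct.le]
  have hV_inv : VH H ((c / d) • H⁻¹) = c / d := by
    rw [VH_eq_lamMax hH (hH.inv.posSemidef.smul hcd.le), Matrix.mul_smul, Matrix.smul_mul,
      hH.sqrt_mul_inv_mul_sqrt, lamMax_smul_one]
  have hratio : VH H ((c / A.trace) • M) / VH H ((c / d) • H⁻¹) = d * lamMax A / A.trace := by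
    rw [hV_M, hV_inv]
    field_simp
  rw [htrace, hratio, one_le_div ht, div_le_iff₀ ht, div_eq_one_iff_eq ht.ne',
    eq_comm (a := _ * lamMax A), hA.1.trace_eq_card_mul_lamMax_iff]
  refine ⟨?_, rfl, hA.1.trace_le_card_mul_lamMax, ?_, ?_⟩
  · rw [Matrix.mul_smul, trace_smul, htrace, smul_eq_mul, div_mul_cancel₀ c ht.ne']
  · exact mul_le_mul_of_nonneg_left hA.posSemidef.lamMax_le_trace (Nat.cast_nonneg d)
  · constructor
    · exact fun h => ⟨lamMax A, hA.lamMax_pos, (hH.sqrt_mul_mul_sqrt_eq_smul_one_iff _).mp h⟩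
    · rintro ⟨α, -, hα⟩
      have hA_eq : A = α • 1 := (hH.sqrt_mul_mul_sqrt_eq_smul_one_iff α).mpr hα
      rw [hA_eq, lamMax_smul_one]
end

section
/- Let n ≥ 1, let V : ℝ^n → ℝ be twice continuously differentiable, and let Δt ∈ ℝ. Define the leapfrog step Ψ : ℝ^n × ℝ^n → ℝ^n × ℝ^n by p_{1/2} := p − (Δt/2)∇V(q), q′ := q + Δt·p_{1/2}, p′ := p_{1/2} − (Δt/2)∇V(q′), Ψ(q,p) := (q′, p′). Then Ψ is differentiable at every point, and at every (q,p) the 2n×2n matrix M of the derivative DΨ(q,p) (in the block coordinates (q,p) with respect to the standard basis) is symplectic: Mᵀ J M = J; consequently det M = 1. -/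
open Matrix

/-- The canonical symplectic matrix `J = [[0, I], [−I, 0]]` of size `2n × 2n`. -/
def Jmat (n : ℕ) : Matrix (Fin n ⊕ Fin n) (Fin n ⊕ Fin n) ℝ :=
  Matrix.fromBlocks 0 1 (-1) 0

/-- The gradient of `V` in standard coordinates: `(∇V(q))ᵢ = ∂V/∂qᵢ`. -/
noncomputable def gradV {n : ℕ} (V : (Fin n → ℝ) → ℝ) (q : Fin n → ℝ) : Fin n → ℝ :=
  fun i => fderiv ℝ V q (Pi.single i 1)

/-- One leapfrog (velocity Verlet) step with potential `V` and step size `Δt`. -/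
noncomputable def leapfrog {n : ℕ} (V : (Fin n → ℝ) → ℝ) (Δt : ℝ) :
    (Fin n → ℝ) × (Fin n → ℝ) → (Fin n → ℝ) × (Fin n → ℝ) :=
  fun s =>
    let ph := s.2 - (Δt / 2) • gradV V s.1
    let q' := s.1 + Δt • ph
    (q', ph - (Δt / 2) • gradV V q')

/-- The standard basis of `ℝ^n × ℝ^n`, indexed by `Fin n ⊕ Fin n`. -/
noncomputable def stdBasis (n : ℕ) :
    Module.Basis (Fin n ⊕ Fin n) ℝ ((Fin n → ℝ) × (Fin n → ℝ)) :=
  (Pi.basisFun ℝ (Fin n)).prod (Pi.basisFun ℝ (Fin n))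

/-! The leapfrog step is the composition kick ∘ drift ∘ kick of two half-step kicks
`(q, p) ↦ (q, p - (Δt/2) ∇V(q))` around a drift `(q, p) ↦ (q + Δt p, p)`. By the chain rule its
Jacobian is the product of the Jacobians of the three maps, which are the block shears
`[[I, 0], [-(Δt/2) H, I]]` and `[[I, Δt I], [0, I]]`, where `H` is the Hessian of `V` at the point
where the kick acts. `H` is symmetric by Schwarz's theorem, a shear with symmetric off-diagonal block
is symplectic with determinant `1`, and both properties pass to products. -/

def IsSymplectic {n : ℕ} (M : Matrix (Fin n ⊕ Fin n) (Fin n ⊕ Fin n) ℝ) : Prop :=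
  Mᵀ * Jmat n * M = Jmat n

theorem IsSymplectic.mul {n : ℕ} {A B : Matrix (Fin n ⊕ Fin n) (Fin n ⊕ Fin n) ℝ}
    (hA : IsSymplectic A) (hB : IsSymplectic B) : IsSymplectic (A * B) := by
  unfold IsSymplectic at *
  calc (A * B)ᵀ * Jmat n * (A * B) = Bᵀ * (Aᵀ * Jmat n * A) * B := by
        rw [transpose_mul]; noncomm_ring
    _ = Jmat n := by rw [hA, hB]

section Shears

variable {n : ℕ} {S : Matrix (Fin n) (Fin n) ℝ}

theorem isSymplectic_fromBlocks_zero₁₂ (hS : S.IsSymm) : IsSymplectic (fromBlocks 1 0 S 1) := by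
  simp [IsSymplectic, Jmat, fromBlocks_transpose, fromBlocks_multiply, hS.eq]

theorem isSymplectic_fromBlocks_zero₂₁ (hS : S.IsSymm) : IsSymplectic (fromBlocks 1 S 0 1) := by
  simp [IsSymplectic, Jmat, fromBlocks_transpose, fromBlocks_multiply, hS.eq]

end Shears

section Gradient

variable {n : ℕ} {V : (Fin n → ℝ) → ℝ} {q : Fin n → ℝ}

theorem hasFDerivAt_gradV (hV : DifferentiableAt ℝ (fderiv ℝ V) q) :
    HasFDerivAt (gradV V)
      (ContinuousLinearMap.pi fun i =>
        (fderiv ℝ (fderiv ℝ V) q).flip (Pi.single i 1)) q :=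
  hasFDerivAt_pi.2 fun i => by
    simpa [gradV] using hV.hasFDerivAt.clm_apply (hasFDerivAt_const (Pi.single i 1) q)

theorem isSymm_toMatrix'_fderiv_gradV (hV : ContDiffAt ℝ 2 V q) :
    (LinearMap.toMatrix' (fderiv ℝ (gradV V) q : (Fin n → ℝ) →ₗ[ℝ] Fin n → ℝ)).IsSymm := by
  have hsymm : IsSymmSndFDerivAt ℝ V q := hV.isSymmSndFDerivAt (by simp)
  have hD : DifferentiableAt ℝ (fderiv ℝ V) q :=
    (hV.fderiv_right (m := 1) le_rfl).differentiableAt one_ne_zero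
  ext i j
  simp [(hasFDerivAt_gradV hD).fderiv, LinearMap.toMatrix'_apply, hsymm (Pi.single i 1)]

theorem differentiable_gradV (hV : ContDiff ℝ 2 V) : Differentiable ℝ (gradV V) := fun q =>
  (hasFDerivAt_gradV ((hV.fderiv_right (m := 1) le_rfl).differentiable one_ne_zero q)).differentiableAt

end Gradient

section Splitting

variable {E : Type*} [NormedAddCommGroup E] [NormedSpace ℝ E]

def kick (g : E → E) (t : ℝ) (s : E × E) : E × E :=
  (s.1, s.2 - t • g s.1)

def drift (t : ℝ) (s : E × E) : E × E :=
  (s.1 + t • s.2, s.2)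

theorem hasFDerivAt_kick {g : E → E} {g' : E →L[ℝ] E} {s : E × E} (t : ℝ)
    (hg : HasFDerivAt g g' s.1) :
    HasFDerivAt (kick g t)
      ((ContinuousLinearMap.fst ℝ E E).prod
        (ContinuousLinearMap.snd ℝ E E - t • g'.comp (ContinuousLinearMap.fst ℝ E E))) s :=
  hasFDerivAt_fst.prodMk (hasFDerivAt_snd.sub ((hg.comp s hasFDerivAt_fst).const_smul t))

theorem hasFDerivAt_drift (t : ℝ) (s : E × E) :
    HasFDerivAt (drift t)
      ((ContinuousLinearMap.fst ℝ E E + t • ContinuousLinearMap.snd ℝ E E).prod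
        (ContinuousLinearMap.snd ℝ E E)) s :=
  (hasFDerivAt_fst.add (hasFDerivAt_snd.const_smul t)).prodMk hasFDerivAt_snd

theorem differentiable_kick {g : E → E} (hg : Differentiable ℝ g) (t : ℝ) :
    Differentiable ℝ (kick g t) := fun s =>
  (hasFDerivAt_kick t (hg s.1).hasFDerivAt).differentiableAt

end Splitting

theorem leapfrog_eq_kick_comp_drift_comp_kick {n : ℕ} (V : (Fin n → ℝ) → ℝ) (Δt : ℝ) :
    leapfrog V Δt = kick (gradV V) (Δt / 2) ∘ drift Δt ∘ kick (gradV V) (Δt / 2) :=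
  rfl

section Coordinates

variable {n : ℕ}

theorem toMatrix_stdBasis (f : ((Fin n → ℝ) × (Fin n → ℝ)) →ₗ[ℝ] (Fin n → ℝ) × (Fin n → ℝ)) :
    LinearMap.toMatrix (stdBasis n) (stdBasis n) f =
      fromBlocks (fun i j => (f (Pi.single j 1, 0)).1 i) (fun i j => (f (0, Pi.single j 1)).1 i)
        (fun i j => (f (Pi.single j 1, 0)).2 i) (fun i j => (f (0, Pi.single j 1)).2 i) := by
  ext (i | i) (j | j) <;>
    simp [LinearMap.toMatrix_apply, _root_.stdBasis] <;> rfl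

theorem toMatrix_fderiv_kick {g : (Fin n → ℝ) → Fin n → ℝ} {s : (Fin n → ℝ) × (Fin n → ℝ)}
    (t : ℝ) (hg : DifferentiableAt ℝ g s.1) :
    LinearMap.toMatrix (stdBasis n) (stdBasis n) (fderiv ℝ (kick g t) s : _ →ₗ[ℝ] _) =
      fromBlocks 1 0 (-(t • LinearMap.toMatrix' (fderiv ℝ g s.1 : _ →ₗ[ℝ] _))) 1 := by
  rw [(hasFDerivAt_kick t hg.hasFDerivAt).fderiv, toMatrix_stdBasis]
  congr 1 <;> ext i j <;>
    simp [LinearMap.toMatrix'_apply, Matrix.one_apply, Pi.single_apply]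

theorem toMatrix_fderiv_drift (t : ℝ) (s : (Fin n → ℝ) × (Fin n → ℝ)) :
    LinearMap.toMatrix (stdBasis n) (stdBasis n) (fderiv ℝ (drift t) s : _ →ₗ[ℝ] _) =
      fromBlocks 1 (t • 1) 0 1 := by
  rw [(hasFDerivAt_drift t s).fderiv, toMatrix_stdBasis]
  congr 1 <;> ext i j <;>
    simp [Matrix.one_apply, Pi.single_apply]

end Coordinates

section Leapfrog

variable {n : ℕ} {V : (Fin n → ℝ) → ℝ}

theorem differentiable_leapfrog (hV : ContDiff ℝ 2 V) (Δt : ℝ) :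
    Differentiable ℝ (leapfrog V Δt) := by
  have hkick := differentiable_kick (differentiable_gradV hV) (Δt / 2)
  intro x
  rw [leapfrog_eq_kick_comp_drift_comp_kick]
  exact (hkick _).comp x (((hasFDerivAt_drift Δt _).differentiableAt).comp x (hkick x))

theorem toMatrix_fderiv_leapfrog (hV : ContDiff ℝ 2 V) (Δt : ℝ) (x : (Fin n → ℝ) × (Fin n → ℝ)) :
    LinearMap.toMatrix (stdBasis n) (stdBasis n) (fderiv ℝ (leapfrog V Δt) x : _ →ₗ[ℝ] _) =
      fromBlocks 1 0
          (-((Δt / 2) • LinearMap.toMatrix' (fderiv ℝ (gradV V) (leapfrog V Δt x).1 : _ →ₗ[ℝ] _))) 1 *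
        fromBlocks 1 (Δt • 1) 0 1 *
        fromBlocks 1 0 (-((Δt / 2) • LinearMap.toMatrix' (fderiv ℝ (gradV V) x.1 : _ →ₗ[ℝ] _))) 1 := by
  have hkick := differentiable_kick (differentiable_gradV hV) (Δt / 2)
  rw [leapfrog_eq_kick_comp_drift_comp_kick, fderiv_comp x (hkick _)
      (((hasFDerivAt_drift Δt _).differentiableAt).comp x (hkick x)),
    fderiv_comp x (hasFDerivAt_drift Δt _).differentiableAt (hkick x)]
  rw [ContinuousLinearMap.toLinearMap_comp, ContinuousLinearMap.toLinearMap_comp,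
    LinearMap.toMatrix_comp _ (stdBasis n), LinearMap.toMatrix_comp _ (stdBasis n),
    toMatrix_fderiv_kick _ (differentiable_gradV hV _), toMatrix_fderiv_drift,
    toMatrix_fderiv_kick _ (differentiable_gradV hV _), mul_assoc]
  rfl

end Leapfrog

theorem stmt11_general {n : ℕ} (V : (Fin n → ℝ) → ℝ)
    (hV : ContDiff ℝ 2 V) (Δt : ℝ) :
    ∀ x : (Fin n → ℝ) × (Fin n → ℝ),
      DifferentiableAt ℝ (leapfrog V Δt) x ∧
      (LinearMap.toMatrix (stdBasis n) (stdBasis n)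
          ((fderiv ℝ (leapfrog V Δt) x :
            ((Fin n → ℝ) × (Fin n → ℝ)) →L[ℝ] ((Fin n → ℝ) × (Fin n → ℝ))) :
            ((Fin n → ℝ) × (Fin n → ℝ)) →ₗ[ℝ] ((Fin n → ℝ) × (Fin n → ℝ))))ᵀ
          * Jmat n *
        LinearMap.toMatrix (stdBasis n) (stdBasis n)
          ((fderiv ℝ (leapfrog V Δt) x :
            ((Fin n → ℝ) × (Fin n → ℝ)) →L[ℝ] ((Fin n → ℝ) × (Fin n → ℝ))) :
            ((Fin n → ℝ) × (Fin n → ℝ)) →ₗ[ℝ] ((Fin n → ℝ) × (Fin n → ℝ)))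
        = Jmat n ∧
      (LinearMap.toMatrix (stdBasis n) (stdBasis n)
          ((fderiv ℝ (leapfrog V Δt) x :
            ((Fin n → ℝ) × (Fin n → ℝ)) →L[ℝ] ((Fin n → ℝ) × (Fin n → ℝ))) :
            ((Fin n → ℝ) × (Fin n → ℝ)) →ₗ[ℝ] ((Fin n → ℝ) × (Fin n → ℝ)))).det = 1 := by
  intro x
  have hkick (q : Fin n → ℝ) :=
    ((isSymm_toMatrix'_fderiv_gradV (q := q) hV.contDiffAt).smul (Δt / 2)).neg
  have hdrift : (Δt • (1 : Matrix (Fin n) (Fin n) ℝ)).IsSymm := isSymm_one.smul _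
  refine ⟨differentiable_leapfrog hV Δt x, ?_, ?_⟩
  · rw [toMatrix_fderiv_leapfrog hV]
    exact ((isSymplectic_fromBlocks_zero₁₂ (hkick _)).mul
      (isSymplectic_fromBlocks_zero₂₁ hdrift)).mul (isSymplectic_fromBlocks_zero₁₂ (hkick _))
  · rw [toMatrix_fderiv_leapfrog hV]
    simp [det_mul]

theorem stmt11 {n : ℕ} (hn : 1 ≤ n) (V : (Fin n → ℝ) → ℝ)
    (hV : ContDiff ℝ 2 V) (Δt : ℝ) :
    ∀ x : (Fin n → ℝ) × (Fin n → ℝ),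
      DifferentiableAt ℝ (leapfrog V Δt) x ∧
      (LinearMap.toMatrix (stdBasis n) (stdBasis n)
          ((fderiv ℝ (leapfrog V Δt) x :
            ((Fin n → ℝ) × (Fin n → ℝ)) →L[ℝ] ((Fin n → ℝ) × (Fin n → ℝ))) :
            ((Fin n → ℝ) × (Fin n → ℝ)) →ₗ[ℝ] ((Fin n → ℝ) × (Fin n → ℝ))))ᵀ
          * Jmat n *
        LinearMap.toMatrix (stdBasis n) (stdBasis n)
          ((fderiv ℝ (leapfrog V Δt) x :
            ((Fin n → ℝ) × (Fin n → ℝ)) →L[ℝ] ((Fin n → ℝ) × (Fin n → ℝ))) :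
            ((Fin n → ℝ) × (Fin n → ℝ)) →ₗ[ℝ] ((Fin n → ℝ) × (Fin n → ℝ)))
        = Jmat n ∧
      (LinearMap.toMatrix (stdBasis n) (stdBasis n)
          ((fderiv ℝ (leapfrog V Δt) x :
            ((Fin n → ℝ) × (Fin n → ℝ)) →L[ℝ] ((Fin n → ℝ) × (Fin n → ℝ))) :
            ((Fin n → ℝ) × (Fin n → ℝ)) →ₗ[ℝ] ((Fin n → ℝ) × (Fin n → ℝ)))).det = 1 :=
  stmt11_general V hV Δt
end

section
/- Let k ≥ 2, τ ∈ ℝ, m > 0, and let Σ be a k×k real symmetric positive definite matrix with log det Σ ≥ k·τ and tr Σ ≤ m. Then the smallest eigenvalue of Σ satisfies λ_min(Σ) ≥ exp(k·τ) · (k−1)^{k−1} / m^{k−1}. -/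
/-!
Let `λ` be any eigenvalue of `Σ`. Then `det Σ` is `λ` times the product of the other `k - 1`
eigenvalues, and by AM–GM that product is at most `((tr Σ - λ) / (k - 1)) ^ (k - 1)
≤ (m / (k - 1)) ^ (k - 1)`. Hence `λ ≥ det Σ · (k - 1) ^ (k - 1) / m ^ (k - 1)`,
and `det Σ ≥ exp (k τ)`.
-/

open Matrix

/-- Smallest eigenvalue of a real symmetric (Hermitian) matrix; junk value `0` otherwise. -/
noncomputable def lamMin {d : ℕ} (M : Matrix (Fin d) (Fin d) ℝ) : ℝ :=
  if h : M.IsHermitian then ⨅ i, h.eigenvalues i else 0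

open Finset

theorem Finset.prod_mul_card_pow_le_pow_of_sum_le {ι : Type*} {s : Finset ι} {z : ι → ℝ}
    {c : ℝ} (hz : ∀ i ∈ s, 0 ≤ z i) (hsum : ∑ i ∈ s, z i ≤ c) :
    (∏ i ∈ s, z i) * (#s : ℝ) ^ #s ≤ c ^ #s := by
  obtain hs | hs := s.eq_empty_or_nonempty
  · simp [hs]
  have hcard : (0 : ℝ) < #s := by exact_mod_cast hs.card_pos
  have hprod : 0 ≤ ∏ i ∈ s, z i := prod_nonneg hz
  have amgm := Real.geom_mean_le_arith_mean s (fun _ ↦ 1) z (fun _ _ ↦ zero_le_one)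
    (by simpa using hcard) hz
  simp only [Real.rpow_one, sum_const, nsmul_eq_mul, mul_one, one_mul] at amgm
  calc (∏ i ∈ s, z i) * (#s : ℝ) ^ #s
      = ((∏ i ∈ s, z i) ^ (#s : ℝ)⁻¹) ^ #s * (#s : ℝ) ^ #s := by
        congr 1
        rw [← Real.rpow_natCast, ← Real.rpow_mul hprod, inv_mul_cancel₀ hcard.ne',
          Real.rpow_one]
    _ ≤ ((∑ i ∈ s, z i) / #s) ^ #s * (#s : ℝ) ^ #s := by gcongr
    _ = (∑ i ∈ s, z i) ^ #s := by rw [← mul_pow, div_mul_cancel₀ _ hcard.ne']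
    _ ≤ c ^ #s := by gcongr; exact sum_nonneg hz

theorem Finset.prod_mul_pow_le_mul_pow_of_sum_le {ι : Type*} [DecidableEq ι] {s : Finset ι}
    {z : ι → ℝ} {c : ℝ} {a : ι} (ha : a ∈ s) (hz : ∀ i ∈ s, 0 ≤ z i)
    (hsum : ∑ i ∈ s, z i ≤ c) :
    (∏ i ∈ s, z i) * ((#s - 1 : ℕ) : ℝ) ^ (#s - 1) ≤ z a * c ^ (#s - 1) := by
  rw [← mul_prod_erase s z ha, ← card_erase_of_mem ha, mul_assoc]
  gcongr
  · exact hz a ha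
  · exact prod_mul_card_pow_le_pow_of_sum_le (fun i hi ↦ hz i (mem_of_mem_erase hi))
      ((sum_le_sum_of_subset_of_nonneg (erase_subset a s) fun i hi _ ↦ hz i hi).trans hsum)

theorem Matrix.PosSemidef.det_mul_pow_le_eigenvalues_mul_pow {n : Type*} [Fintype n]
    [DecidableEq n] {A : Matrix n n ℝ} (hA : A.PosSemidef) {c : ℝ} (htr : A.trace ≤ c)
    (i : n) :
    A.det * ((Fintype.card n - 1 : ℕ) : ℝ) ^ (Fintype.card n - 1)
      ≤ hA.isHermitian.eigenvalues i * c ^ (Fintype.card n - 1) := by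
  rw [hA.isHermitian.det_eq_prod_eigenvalues]
  rw [hA.isHermitian.trace_eq_sum_eigenvalues] at htr
  simpa using prod_mul_pow_le_mul_pow_of_sum_le (mem_univ i)
    (fun j _ ↦ hA.eigenvalues_nonneg j) (by simpa using htr)

theorem le_lamMin {d : ℕ} [NeZero d] {M : Matrix (Fin d) (Fin d) ℝ} (hM : M.IsHermitian)
    {x : ℝ} (h : ∀ i, x ≤ hM.eigenvalues i) : x ≤ lamMin M := by
  rw [lamMin, dif_pos hM]
  exact le_ciInf h

theorem stmt15 {k : ℕ} (hk : 2 ≤ k) (τ : ℝ) (m : ℝ) (hm : 0 < m)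
    (S : Matrix (Fin k) (Fin k) ℝ) (hS : S.PosDef)
    (hdet : (k : ℝ) * τ ≤ Real.log S.det) (htr : S.trace ≤ m) :
    Real.exp ((k : ℝ) * τ) * ((k : ℝ) - 1) ^ (k - 1) / m ^ (k - 1) ≤ lamMin S := by
  have : NeZero k := ⟨by omega⟩
  have hexp_le_det : Real.exp ((k : ℝ) * τ) ≤ S.det :=
    (Real.le_log_iff_exp_le hS.det_pos).mp hdet
  refine le_lamMin hS.isHermitian fun i ↦ ?_
  have hdet_le := hS.posSemidef.det_mul_pow_le_eigenvalues_mul_pow htr i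
  rw [Fintype.card_fin] at hdet_le
  rw [div_le_iff₀ (by positivity), ← Nat.cast_pred (by omega)]
  calc _ ≤ S.det * ((k - 1 : ℕ) : ℝ) ^ (k - 1) := by gcongr
    _ ≤ _ := hdet_le
end

section
/- Let k ≥ 1, c > 0, r₀ ∈ (1, k], τ ∈ ℝ, and let Σ be a k×k real symmetric positive definite matrix with tr Σ = c, PR(Σ) ≥ r₀, and (1/k)·log det Σ ≥ τ. Then λ_max(Σ) ≤ c/√r₀ and λ_min(Σ) ≥ exp(k·τ)·(√r₀/c)^{k−1}. Consequently the condition number satisfies λ_max(Σ)/λ_min(Σ) ≤ exp(−k·τ)·(c/√r₀)^{k}. -/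
/-!
Since tr Σ² ≥ λᵢ², the participation-ratio bound gives λᵢ ≤ c/√r₀ for every eigenvalue.
Writing det Σ as λ_min times the product of the other k − 1 eigenvalues, each at most c/√r₀,
the determinant bound det Σ ≥ exp(kτ) yields the lower bound on λ_min; the bound on the
condition number is the quotient of the two.
-/

open Matrix

theorem le_sum_div_sqrt_of_le_sq_sum_div_sum_sq {ι : Type*} [Fintype ι] {x : ι → ℝ} {r : ℝ}
    (hx : ∀ i, 0 ≤ x i) (hr : 0 < r) (h : r ≤ (∑ i, x i) ^ 2 / ∑ i, x i ^ 2) (i : ι) :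
    x i ≤ (∑ i, x i) / √r := by
  have hsq : 0 < ∑ j, x j ^ 2 := by
    -- a zero denominator would make the bound read `r ≤ 0`
    refine (Finset.sum_nonneg fun j _ => sq_nonneg (x j)).lt_of_ne' fun h0 => ?_
    rw [h0, div_zero] at h
    exact hr.not_ge h
  have hsum : 0 ≤ ∑ j, x j := Finset.sum_nonneg fun j _ => hx j
  refine (pow_le_pow_iff_left₀ (hx i) (by positivity) two_ne_zero).mp ?_
  calc x i ^ 2 ≤ ∑ j, x j ^ 2 :=
        Finset.single_le_sum (fun j _ => sq_nonneg (x j)) (Finset.mem_univ i)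
    _ ≤ (∑ j, x j) ^ 2 / r := by rwa [le_div_iff₀ hr, ← le_div_iff₀' hsq]
    _ = ((∑ j, x j) / √r) ^ 2 := by rw [div_pow, Real.sq_sqrt hr.le]

namespace Matrix.IsHermitian

variable {n 𝕜 : Type*} [Fintype n] [DecidableEq n] [RCLike 𝕜] {A : Matrix n n 𝕜}

theorem trace_mul_self_eq_sum_eigenvalues_sq (hA : A.IsHermitian) :
    (A * A).trace = ∑ i, (hA.eigenvalues i : 𝕜) ^ 2 := by
  have hAA : A * A = Unitary.conjStarAlgAut 𝕜 _ hA.eigenvectorUnitary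
      (diagonal (RCLike.ofReal ∘ hA.eigenvalues) * diagonal (RCLike.ofReal ∘ hA.eigenvalues)) := by
    rw [map_mul, ← hA.spectral_theorem]
  rw [hAA, Unitary.conjStarAlgAut_apply, trace_mul_cycle, Unitary.coe_star_mul_self, one_mul,
    diagonal_mul_diagonal, trace_diagonal]
  simp [sq]

end Matrix.IsHermitian

section Extremal

variable {d : ℕ} {S : Matrix (Fin d) (Fin d) ℝ}

theorem lamMax_eq_iSup (hS : S.IsHermitian) : lamMax S = ⨆ i, hS.eigenvalues i := dif_pos hS

theorem lamMin_eq_iInf (hS : S.IsHermitian) : lamMin S = ⨅ i, hS.eigenvalues i := dif_pos hS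

theorem eigenvalues_le_lamMax (hS : S.IsHermitian) (i : Fin d) : hS.eigenvalues i ≤ lamMax S := by
  rw [lamMax_eq_iSup hS]
  exact le_ciSup (Finite.bddAbove_range _) i

theorem exists_eigenvalues_eq_lamMin [Nonempty (Fin d)] (hS : S.IsHermitian) :
    ∃ i, hS.eigenvalues i = lamMin S := by
  rw [lamMin_eq_iInf hS]
  exact exists_eq_ciInf_of_finite

theorem Matrix.PosSemidef.lamMax_le_trace_div_sqrt (hS : S.PosSemidef) {r : ℝ} (hr : 0 < r)
    (hPR : r ≤ S.trace ^ 2 / (S * S).trace) : lamMax S ≤ S.trace / √r := by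
  have htr := hS.isHermitian.trace_eq_sum_eigenvalues
  have htr2 := hS.isHermitian.trace_mul_self_eq_sum_eigenvalues_sq
  simp only [RCLike.ofReal_real_eq_id, id] at htr htr2
  rw [htr, htr2] at hPR
  rw [lamMax_eq_iSup hS.isHermitian, htr]
  exact Real.iSup_le (le_sum_div_sqrt_of_le_sq_sum_div_sum_sq hS.eigenvalues_nonneg hr hPR)
    (div_nonneg (Finset.sum_nonneg fun i _ => hS.eigenvalues_nonneg i) (Real.sqrt_nonneg r))

theorem Matrix.PosSemidef.det_le_lamMin_mul_pow_of_lamMax_le [Nonempty (Fin d)]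
    (hS : S.PosSemidef) {M : ℝ} (hM : lamMax S ≤ M) : S.det ≤ lamMin S * M ^ (d - 1) := by
  obtain ⟨i₀, hi₀⟩ := exists_eigenvalues_eq_lamMin hS.isHermitian
  have hprod : ∏ j ∈ Finset.univ.erase i₀, hS.isHermitian.eigenvalues j ≤ M ^ (d - 1) :=
    calc _ ≤ ∏ _j ∈ Finset.univ.erase i₀, M :=
          Finset.prod_le_prod (fun j _ => hS.eigenvalues_nonneg j)
            (fun j _ => (eigenvalues_le_lamMax hS.isHermitian j).trans hM)
      _ = M ^ (d - 1) := by simp [Finset.card_erase_of_mem]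
  rw [hS.isHermitian.det_eq_prod_eigenvalues, ← Finset.mul_prod_erase _ _ (Finset.mem_univ i₀)]
  simp only [RCLike.ofReal_real_eq_id, id, hi₀]
  exact mul_le_mul_of_nonneg_left hprod (hi₀ ▸ hS.eigenvalues_nonneg i₀)

end Extremal

theorem stmt16_general {k : ℕ} (hk : 1 ≤ k) (c : ℝ) (hc : 0 < c) (r₀ : ℝ)
    (hr₀ : 1 < r₀) (τ : ℝ)
    (S : Matrix (Fin k) (Fin k) ℝ) (hS : S.PosDef)
    (htr : S.trace = c)
    (hPR : r₀ ≤ S.trace ^ 2 / (S * S).trace)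
    (hdet : τ ≤ (1 / (k : ℝ)) * Real.log S.det) :
    lamMax S ≤ c / Real.sqrt r₀ ∧
    Real.exp ((k : ℝ) * τ) * (Real.sqrt r₀ / c) ^ (k - 1) ≤ lamMin S ∧
    lamMax S / lamMin S ≤ Real.exp (-((k : ℝ) * τ)) * (c / Real.sqrt r₀) ^ k := by
  have : Nonempty (Fin k) := ⟨⟨0, hk⟩⟩
  have hr : 0 < r₀ := zero_lt_one.trans hr₀
  have hM : 0 < c / √r₀ := by positivity
  have hmax : lamMax S ≤ c / √r₀ := htr ▸ hS.posSemidef.lamMax_le_trace_div_sqrt hr hPR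
  have hexp : Real.exp (k * τ) ≤ S.det := by
    rwa [← Real.le_log_iff_exp_le hS.det_pos, ← le_inv_mul_iff₀ (by positivity), ← one_div]
  have hmin : Real.exp (k * τ) * (√r₀ / c) ^ (k - 1) ≤ lamMin S := by
    rw [← inv_div c, inv_pow, ← div_eq_mul_inv, div_le_iff₀ (by positivity)]
    exact hexp.trans (hS.posSemidef.det_le_lamMin_mul_pow_of_lamMax_le hmax)
  refine ⟨hmax, hmin, ?_⟩
  calc lamMax S / lamMin S ≤ c / √r₀ / (Real.exp (k * τ) * (√r₀ / c) ^ (k - 1)) :=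
        div_le_div₀ hM.le hmax (by positivity) hmin
    _ = Real.exp (-(k * τ)) * (c / √r₀) ^ k := by
        rw [← inv_div c, inv_pow, Real.exp_neg, ← pow_sub_one_mul (by omega : k ≠ 0)]
        field_simp

theorem stmt16 {k : ℕ} (hk : 1 ≤ k) (c : ℝ) (hc : 0 < c) (r₀ : ℝ)
    (hr₀ : 1 < r₀) (hr₀' : r₀ ≤ (k : ℝ)) (τ : ℝ)
    (S : Matrix (Fin k) (Fin k) ℝ) (hS : S.PosDef)
    (htr : S.trace = c)
    (hPR : r₀ ≤ S.trace ^ 2 / (S * S).trace)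
    (hdet : τ ≤ (1 / (k : ℝ)) * Real.log S.det) :
    lamMax S ≤ c / Real.sqrt r₀ ∧
    Real.exp ((k : ℝ) * τ) * (Real.sqrt r₀ / c) ^ (k - 1) ≤ lamMin S ∧
    lamMax S / lamMin S ≤ Real.exp (-((k : ℝ) * τ)) * (c / Real.sqrt r₀) ^ k :=
  stmt16_general hk c hc r₀ hr₀ τ S hS htr hPR hdet
end

section
/- Let n ≥ 1 and let A be a 2n×2n real symplectic matrix (AᵀJA = J) with block decomposition A = [[a, b], [c, d]] into n×n blocks, and assume the block d is invertible. Define B := b·d⁻¹ and C := d⁻¹·c. Then B and C are symmetric, and A factors as A = [[I, B], [0, I]] · [[d⁻ᵀ, 0], [0, d]] · [[I, 0], [C, I]], i.e. as an upper unipotent shear (drift), a symplectic scaling, and a lower unipotent shear (kick). -/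
open Matrix

/-!
Since `A` is symplectic, so is `Aᵀ`, and the block identities of `AᵀJA = J` and `AJAᵀ = J`
give `bᵀd = dᵀb`, `cdᵀ = dcᵀ` and `adᵀ - bcᵀ = 1`. The first two say that `bd⁻¹` and `d⁻¹c`
are symmetric, and with them the third says that the Schur complement `a - bd⁻¹c` of `d` is `d⁻ᵀ`.
The factorization is then the block LDU decomposition of `A` with respect to the invertible
block `d`.
-/

namespace Matrix

variable {l R : Type*} [Fintype l] [DecidableEq l] [CommRing R] {a b c d : Matrix l l R}

theorem isSymm_mul_nonsing_inv (hd : IsUnit d) (h : bᵀ * d = dᵀ * b) : (b * d⁻¹).IsSymm := by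
  have hdet : IsUnit d.det := (isUnit_iff_isUnit_det d).1 hd
  calc (b * d⁻¹)ᵀ = dᵀ⁻¹ * (bᵀ * d) * d⁻¹ := by
        rw [transpose_mul, transpose_nonsing_inv, Matrix.mul_assoc dᵀ⁻¹,
          mul_nonsing_inv_cancel_right _ _ hdet]
    _ = b * d⁻¹ := by
        rw [h, nonsing_inv_mul_cancel_left _ _ (isUnit_det_transpose _ hdet)]

theorem isSymm_nonsing_inv_mul (hd : IsUnit d) (h : c * dᵀ = d * cᵀ) : (d⁻¹ * c).IsSymm := by
  have hsymm := isSymm_mul_nonsing_inv (b := cᵀ) (d := dᵀ) ((isUnit_transpose d).2 hd)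
    (by simpa using h)
  rwa [← transpose_nonsing_inv, ← transpose_mul, IsSymm, transpose_transpose, eq_comm] at hsymm

end Matrix

namespace SymplecticGroup

variable {l R : Type*} [Fintype l] [DecidableEq l] [CommRing R] {a b c d : Matrix l l R}

theorem fromBlocks_mem_iff_transpose :
    fromBlocks a b c d ∈ symplecticGroup l R ↔
      a * bᵀ = b * aᵀ ∧ c * dᵀ = d * cᵀ ∧ a * dᵀ - b * cᵀ = 1 := by
  rw [← transpose_mem_iff, fromBlocks_transpose, fromBlocks_mem_iff]
  simp only [transpose_transpose]

variable (hA : fromBlocks a b c d ∈ symplecticGroup l R) (hd : IsUnit d)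
include hA hd

theorem isSymm_mul_nonsing_inv_of_fromBlocks_mem : (b * d⁻¹).IsSymm :=
  isSymm_mul_nonsing_inv hd (fromBlocks_mem_iff.1 hA).2.1

theorem isSymm_nonsing_inv_mul_of_fromBlocks_mem : (d⁻¹ * c).IsSymm :=
  isSymm_nonsing_inv_mul hd (fromBlocks_mem_iff_transpose.1 hA).2.1

theorem sub_mul_nonsing_inv_mul_of_fromBlocks_mem : a - b * d⁻¹ * c = d⁻¹ᵀ := by
  have hdetT : IsUnit dᵀ.det := isUnit_det_transpose _ ((isUnit_iff_isUnit_det d).1 hd)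
  have hC : cᵀ * d⁻¹ᵀ = d⁻¹ * c := by
    rw [← transpose_mul]; exact isSymm_nonsing_inv_mul_of_fromBlocks_mem hA hd
  have had : a * dᵀ = 1 + b * cᵀ := by
    rw [← (fromBlocks_mem_iff_transpose.1 hA).2.2]; abel
  calc a - b * d⁻¹ * c = a * dᵀ * d⁻¹ᵀ - b * (cᵀ * d⁻¹ᵀ) := by
        rw [hC, transpose_nonsing_inv, mul_nonsing_inv_cancel_right _ _ hdetT, Matrix.mul_assoc]
    _ = d⁻¹ᵀ := by rw [had, Matrix.add_mul, Matrix.one_mul, Matrix.mul_assoc]; abel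

end SymplecticGroup

theorem Jmat_eq_neg_J (n : ℕ) : Jmat n = -J (Fin n) ℝ := by
  simp [Jmat, J, fromBlocks_neg]

theorem mem_symplecticGroup_iff_transpose_mul_Jmat_mul {n : ℕ}
    {A : Matrix (Fin n ⊕ Fin n) (Fin n ⊕ Fin n) ℝ} :
    A ∈ symplecticGroup (Fin n) ℝ ↔ Aᵀ * Jmat n * A = Jmat n := by
  simp [SymplecticGroup.mem_iff', Jmat_eq_neg_J]

theorem stmt19_general {n : ℕ}
    (a b c d : Matrix (Fin n) (Fin n) ℝ)
    (hd : IsUnit d)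
    (hA : (Matrix.fromBlocks a b c d)ᵀ * Jmat n * Matrix.fromBlocks a b c d = Jmat n) :
    (b * d⁻¹)ᵀ = b * d⁻¹ ∧
    (d⁻¹ * c)ᵀ = d⁻¹ * c ∧
    Matrix.fromBlocks a b c d
      = Matrix.fromBlocks 1 (b * d⁻¹) 0 1 *
        Matrix.fromBlocks (d⁻¹)ᵀ 0 0 d *
        Matrix.fromBlocks 1 0 (d⁻¹ * c) 1 := by
  have hS := mem_symplecticGroup_iff_transpose_mul_Jmat_mul.2 hA
  have := hd.invertible
  refine ⟨(SymplecticGroup.isSymm_mul_nonsing_inv_of_fromBlocks_mem hS hd).eq,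
    (SymplecticGroup.isSymm_nonsing_inv_mul_of_fromBlocks_mem hS hd).eq, ?_⟩
  rw [fromBlocks_eq_of_invertible₂₂, invOf_eq_nonsing_inv,
    SymplecticGroup.sub_mul_nonsing_inv_mul_of_fromBlocks_mem hS hd]

theorem stmt19 {n : ℕ} (hn : 1 ≤ n)
    (a b c d : Matrix (Fin n) (Fin n) ℝ)
    (hd : IsUnit d)
    (hA : (Matrix.fromBlocks a b c d)ᵀ * Jmat n * Matrix.fromBlocks a b c d = Jmat n) :
    (b * d⁻¹)ᵀ = b * d⁻¹ ∧
    (d⁻¹ * c)ᵀ = d⁻¹ * c ∧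
    Matrix.fromBlocks a b c d
      = Matrix.fromBlocks 1 (b * d⁻¹) 0 1 *
        Matrix.fromBlocks (d⁻¹)ᵀ 0 0 d *
        Matrix.fromBlocks 1 0 (d⁻¹ * c) 1 :=
  stmt19_general a b c d hd hA
end
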